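/- Let S be a multiplicatively closed subset of a commutative Noetherian ring R, and let M be an S⁻¹R-module that is Gorenstein injective as an S⁻¹R-module. Then M is Gorenstein injective as an R-module. -/

import Mathlib

universe u

namespace GG

open RingTheory.Sequence

variable (R : Type u) [CommRing R]

/-- A module `N` is Gorenstein injective if it is a kernel in a `Hom(Inj,−)`-exact exact
doubly infinite complex of injective modules. -/
def IsGorensteinInjective (N : Type u) [AddCommGroup N] [Module R N] : Prop :=
  ∃ (X : ℤ → ModuleCat.{u} R) (d : ∀ n : ℤ, X n →ₗ[R] X (n + 1)),
    (∀ n, Module.Injective R (X n)) ∧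
    (∀ n, LinearMap.range (d n) = LinearMap.ker (d (n + 1))) ∧
    (∀ (I : ModuleCat.{u} R), Module.Injective R I →
      ∀ (n : ℤ) (φ : I →ₗ[R] X (n + 1)), (d (n + 1)).comp φ = 0 →
        ∃ ψ : I →ₗ[R] X n, (d n).comp ψ = φ) ∧
    Nonempty (N ≃ₗ[R] LinearMap.ker (d 0))

/-- A module `N` is Gorenstein projective if it is a kernel in a `Hom(−,Proj)`-exact exact
doubly infinite complex of projective modules. -/
def IsGorensteinProjective (N : Type u) [AddCommGroup N] [Module R N] : Prop :=
  ∃ (X : ℤ → ModuleCat.{u} R) (d : ∀ n : ℤ, X n →ₗ[R] X (n + 1)),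
    (∀ n, Module.Projective R (X n)) ∧
    (∀ n, LinearMap.range (d n) = LinearMap.ker (d (n + 1))) ∧
    (∀ (P : ModuleCat.{u} R), Module.Projective R P →
      ∀ (n : ℤ) (φ : X (n + 1) →ₗ[R] P), φ.comp (d n) = 0 →
        ∃ ψ : X (n + 1 + 1) →ₗ[R] P, ψ.comp (d (n + 1)) = φ) ∧
    Nonempty (N ≃ₗ[R] LinearMap.ker (d 0))

/-- A module `N` is Gorenstein flat if it is a kernel in an `(Inj ⊗ −)`-exact exact
doubly infinite complex of flat modules. -/
def IsGorensteinFlat (N : Type u) [AddCommGroup N] [Module R N] : Prop :=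
  ∃ (X : ℤ → ModuleCat.{u} R) (d : ∀ n : ℤ, X n →ₗ[R] X (n + 1)),
    (∀ n, Module.Flat R (X n)) ∧
    (∀ n, LinearMap.range (d n) = LinearMap.ker (d (n + 1))) ∧
    (∀ (I : ModuleCat.{u} R), Module.Injective R I →
      ∀ n : ℤ, LinearMap.range (LinearMap.lTensor (R := R) I (d n)) =
        LinearMap.ker (LinearMap.lTensor (R := R) I (d (n + 1)))) ∧
    Nonempty (N ≃ₗ[R] LinearMap.ker (d 0))

/-- Existence of a right resolution of length `≤ n` by modules satisfying `P`. -/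
def CoresolutionLE (P : ModuleCat.{u} R → Prop) (M : Type u) [AddCommGroup M] [Module R M]
    (n : ℕ) : Prop :=
  ∃ (G : ℕ → ModuleCat.{u} R) (d : ∀ i : ℕ, G i →ₗ[R] G (i + 1)) (ε : M →ₗ[R] G 0),
    (∀ i, P (G i)) ∧ Function.Injective ε ∧
    LinearMap.range ε = LinearMap.ker (d 0) ∧
    (∀ i, LinearMap.range (d i) = LinearMap.ker (d (i + 1))) ∧
    (∀ i, n < i → ∀ x : G i, x = 0)

/-- Existence of a left resolution of length `≤ n` by modules satisfying `P`. -/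
def ResolutionLE (P : ModuleCat.{u} R → Prop) (M : Type u) [AddCommGroup M] [Module R M]
    (n : ℕ) : Prop :=
  ∃ (G : ℕ → ModuleCat.{u} R) (d : ∀ i : ℕ, G (i + 1) →ₗ[R] G i) (ε : G 0 →ₗ[R] M),
    (∀ i, P (G i)) ∧ Function.Surjective ε ∧
    LinearMap.ker ε = LinearMap.range (d 0) ∧
    (∀ i, LinearMap.ker (d i) = LinearMap.range (d (i + 1))) ∧
    (∀ i, n < i → ∀ x : G i, x = 0)

/-- `Gid_R M ≤ n`. -/
def gidLE (M : Type u) [AddCommGroup M] [Module R M] (n : ℕ) : Prop :=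
  CoresolutionLE R (fun N => IsGorensteinInjective R N) M n

/-- `id_R M ≤ n`. -/
def idLE (M : Type u) [AddCommGroup M] [Module R M] (n : ℕ) : Prop :=
  CoresolutionLE R (fun N => Module.Injective R N) M n

/-- `pd_R M ≤ n`. -/
def pdLE (M : Type u) [AddCommGroup M] [Module R M] (n : ℕ) : Prop :=
  ResolutionLE R (fun N => Module.Projective R N) M n

/-- `fd_R M ≤ n`. -/
def fdLE (M : Type u) [AddCommGroup M] [Module R M] (n : ℕ) : Prop :=
  ResolutionLE R (fun N => Module.Flat R N) M n

/-- `Gfd_R M ≤ n`. -/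
def gfdLE (M : Type u) [AddCommGroup M] [Module R M] (n : ℕ) : Prop :=
  ResolutionLE R (fun N => IsGorensteinFlat R N) M n

/-- Gorenstein injective dimension, as an extended natural number. -/
noncomputable def gid (M : Type u) [AddCommGroup M] [Module R M] : ℕ∞ :=
  sInf {c : ℕ∞ | ∃ n : ℕ, c = n ∧ gidLE R M n}

/-- The depth of a module over a local ring: the supremum of the lengths of regular
sequences contained in the maximal ideal. -/
noncomputable def mdepth [IsLocalRing R] (M : Type u) [AddCommGroup M] [Module R M] : ℕ∞ :=
  sSup {c : ℕ∞ | ∃ rs : List R, c = rs.length ∧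
    (∀ r ∈ rs, r ∈ IsLocalRing.maximalIdeal R) ∧ RingTheory.Sequence.IsRegular M rs}

/-- The Krull dimension of a module: the Krull dimension of its support. -/
noncomputable def mdim (M : Type u) [AddCommGroup M] [Module R M] : WithBot ℕ∞ :=
  Order.krullDim ↥(Module.support R M)

/-- The height of a prime in the support of `M`. -/
noncomputable def htM (M : Type u) [AddCommGroup M] [Module R M] (p : PrimeSpectrum R) : ℕ∞ :=
  ⨆ h : p ∈ Module.support R M, Order.height (⟨p, h⟩ : ↥(Module.support R M))

/-- A Cohen–Macaulay module over a local ring: depth equals Krull dimension. -/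
def IsCMModule [IsLocalRing R] (M : Type u) [AddCommGroup M] [Module R M] : Prop :=
  (mdepth R M : WithBot ℕ∞) = mdim R M

/-- A maximal Cohen–Macaulay module over a local ring. -/
def IsMaximalCM [IsLocalRing R] (M : Type u) [AddCommGroup M] [Module R M] : Prop :=
  IsCMModule R M ∧ mdim R M = ringKrullDim R

/-- A Cohen–Macaulay local ring. -/
def IsCMLocalRing [IsLocalRing R] : Prop :=
  (mdepth R R : WithBot ℕ∞) = ringKrullDim R

/-- A Gorenstein local ring: a Noetherian local ring of finite self-injective dimension. -/
def IsGorensteinLocalRing [IsLocalRing R] : Prop :=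
  IsNoetherianRing R ∧ ∃ n : ℕ, idLE R R n

/-- A regular local ring: Noetherian, and the maximal ideal is generated by `dim R` elements. -/
def IsRegularLocal [IsLocalRing R] : Prop :=
  IsNoetherianRing R ∧ ∃ s : Finset R, Ideal.span (s : Set R) = IsLocalRing.maximalIdeal R ∧
    (s.card : WithBot ℕ∞) = ringKrullDim R

/-- A (not necessarily local) Gorenstein ring: all localizations at primes are Gorenstein. -/
def IsGorensteinRing : Prop :=
  ∀ p : PrimeSpectrum R, ∃ n : ℕ,
    idLE (Localization.AtPrime p.asIdeal) (Localization.AtPrime p.asIdeal) n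

/-- `R` admits a dualizing complex; by Kawasaki's theorem this is equivalent to being a
homomorphic image of a finite-dimensional Gorenstein ring. -/
def HasDualizingComplex : Prop :=
  ∃ Q : CommRingCat.{u}, IsNoetherianRing Q ∧ ringKrullDim Q < ⊤ ∧ IsGorensteinRing Q ∧
    ∃ f : Q →+* R, Function.Surjective f

section Cousin

/-- The product of the localizations of `N` at the primes in `S`. -/
noncomputable abbrev locProd (S : Set (PrimeSpectrum R)) (N : Type u) [AddCommGroup N]
    [Module R N] : Type u :=
  Π p : S, LocalizedModule p.1.asIdeal.primeCompl N

/-- The submodule of the product of localizations consisting of finitely supported families;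
this is the direct sum `⊕_{p ∈ S} N_p`. -/
noncomputable def finSupp (S : Set (PrimeSpectrum R)) (N : Type u) [AddCommGroup N]
    [Module R N] : Submodule R (locProd R S N) where
  carrier := {f | {p : S | f p ≠ 0}.Finite}
  add_mem' := by
    intro f g hf hg
    refine (hf.union hg).subset ?_
    intro p hp
    by_contra h
    simp only [Set.mem_union, Set.mem_setOf_eq, not_or, not_not] at h
    exact hp (by simp [Pi.add_apply, h.1, h.2])
  zero_mem' := by simp
  smul_mem' := by
    intro c f hf
    refine hf.subset ?_
    intro p hp
    by_contra h
    simp only [Set.mem_setOf_eq, not_not] at h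
    exact hp (by simp [Pi.smul_apply, h])

/-- The canonical map `N → ∏_{p ∈ S} N_p`. -/
noncomputable def thetaFull (S : Set (PrimeSpectrum R)) (N : Type u) [AddCommGroup N]
    [Module R N] : N →ₗ[R] locProd R S N :=
  LinearMap.pi fun p => LocalizedModule.mkLinearMap p.1.asIdeal.primeCompl N

/-- The cokernel of `N → ⊕_{p ∈ S} N_p` (computed inside the direct sum). -/
noncomputable abbrev nextKType (S : Set (PrimeSpectrum R)) (N : Type u) [AddCommGroup N]
    [Module R N] : Type u :=
  ↥(finSupp R S N) ⧸
    (Submodule.comap (finSupp R S N).subtype (LinearMap.range (thetaFull R S N)))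

/-- The sequence of "kernel/cokernel" modules in the inductive construction
of the Cousin complex of `M` with respect to the filtration `F`. -/
noncomputable def cousinK (F : ℕ → Set (PrimeSpectrum R)) (M : ModuleCat.{u} R) :
    ℕ → ModuleCat.{u} R
  | 0 => M
  | n + 1 => ModuleCat.of R (nextKType R (F n \ F (n + 1)) (cousinK F M n))

/-- The `n`-th term `M^n = ⊕_{p ∈ ∂F_n} (coker d^{n-2})_p` of the Cousin complex. -/
noncomputable abbrev cousinC (F : ℕ → Set (PrimeSpectrum R)) (M : ModuleCat.{u} R) (n : ℕ) :
    Type u :=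
  ↥(finSupp R (F n \ F (n + 1)) (cousinK R F M n))

/-- The canonical map from the `n`-th cokernel into the product of its localizations. -/
noncomputable def cousinTheta (F : ℕ → Set (PrimeSpectrum R)) (M : ModuleCat.{u} R) (n : ℕ) :
    (cousinK R F M n) →ₗ[R] locProd R (F n \ F (n + 1)) (cousinK R F M n) :=
  thetaFull R _ _

/-- The (full) `n`-th differential of the Cousin complex, from `M^n` to the product at
level `n+1` (it lands inside the direct sum `M^{n+1}`). -/
noncomputable def cousinD (F : ℕ → Set (PrimeSpectrum R)) (M : ModuleCat.{u} R) (n : ℕ) :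
    (cousinC R F M n) →ₗ[R] locProd R (F (n + 1) \ F (n + 2)) (cousinK R F M (n + 1)) :=
  (cousinTheta R F M (n + 1)).comp
    (Submodule.mkQ (Submodule.comap (finSupp R (F n \ F (n + 1)) (cousinK R F M n)).subtype
      (LinearMap.range (thetaFull R (F n \ F (n + 1)) (cousinK R F M n)))))

/-- `F` is a filtration of `Spec R`: descending, and every element of `∂F_n = F_n \ F_{n+1}`
is a minimal member of `F_n`. -/
def IsFiltration (F : ℕ → Set (PrimeSpectrum R)) : Prop :=
  (∀ n, F (n + 1) ⊆ F n) ∧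
    ∀ n, ∀ p ∈ F n \ F (n + 1), ∀ q ∈ F n, q ≤ p → q = p

/-- The filtration `F` admits `M`. -/
def Admits (F : ℕ → Set (PrimeSpectrum R)) (M : Type u) [AddCommGroup M] [Module R M] : Prop :=
  Module.support R M ⊆ F 0

/-- The `M`-height filtration `K_i = {p ∈ Supp M | ht_M p ≥ i}`. -/
noncomputable def heightFiltration (M : Type u) [AddCommGroup M] [Module R M] :
    ℕ → Set (PrimeSpectrum R) :=
  fun i => {p | p ∈ Module.support R M ∧ (i : ℕ∞) ≤ htM R M p}

/-- The Cousin complex `C(F, M)` is exact at `M, M⁰, …, M^t`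
(together with the well-definedness of the differentials into the direct sums). -/
def CousinPartiallyExact (F : ℕ → Set (PrimeSpectrum R)) (M : ModuleCat.{u} R) (t : ℕ) : Prop :=
  (∀ n, LinearMap.range (cousinTheta R F M n) ≤ finSupp R (F n \ F (n + 1)) (cousinK R F M n)) ∧
  Function.Injective (cousinTheta R F M 0) ∧
  (∀ n ≤ t, LinearMap.ker (cousinD R F M n) =
    Submodule.comap (finSupp R (F n \ F (n + 1)) (cousinK R F M n)).subtype
      (LinearMap.range (cousinTheta R F M n)))

/-- The Cousin complex `C(F, M)` is exact and all of its terms satisfy `P`, i.e. it provides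
a `P`-resolution of `M`. -/
def CousinResolves (F : ℕ → Set (PrimeSpectrum R)) (M : ModuleCat.{u} R)
    (P : ModuleCat.{u} R → Prop) : Prop :=
  (∀ n, LinearMap.range (cousinTheta R F M n) ≤ finSupp R (F n \ F (n + 1)) (cousinK R F M n)) ∧
  Function.Injective (cousinTheta R F M 0) ∧
  (∀ n, LinearMap.ker (cousinD R F M n) =
    Submodule.comap (finSupp R (F n \ F (n + 1)) (cousinK R F M n)).subtype
      (LinearMap.range (cousinTheta R F M n))) ∧
  (∀ n, P (ModuleCat.of R (cousinC R F M n)))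

/-- A G–Gorenstein module: a nonzero finitely generated module whose Cousin complex with
respect to the `M`-height filtration is a Gorenstein injective resolution. -/
def IsGGorenstein (M : ModuleCat.{u} R) : Prop :=
  (∃ x : M, x ≠ 0) ∧ Module.Finite R M ∧
    CousinResolves R (heightFiltration R M) M (fun N => IsGorensteinInjective R N)

/-- A Gorenstein module: a nonzero finitely generated module whose Cousin complex with
respect to the `M`-height filtration is an injective resolution. -/
def IsGorensteinModule (M : ModuleCat.{u} R) : Prop :=
  (∃ x : M, x ≠ 0) ∧ Module.Finite R M ∧
    CousinResolves R (heightFiltration R M) M (fun N => Module.Injective R N)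

end Cousin

/-- A system of parameters of a local ring. -/
def IsSOP [IsLocalRing R] (rs : List R) : Prop :=
  (rs.length : WithBot ℕ∞) = ringKrullDim R ∧
    (∀ r ∈ rs, r ∈ IsLocalRing.maximalIdeal R) ∧
    IsLocalRing.maximalIdeal R ≤ (Ideal.span {r | r ∈ rs}).radical

/-- A balanced big Cohen–Macaulay module: every system of parameters of `R` is a regular
sequence on `M`. -/
def IsBalancedBigCM [IsLocalRing R] (M : Type u) [AddCommGroup M] [Module R M] : Prop :=
  ∀ rs : List R, IsSOP R rs → RingTheory.Sequence.IsRegular M rs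

end GG

/-! For an `S⁻¹R`-module `E`, `Hom_R(X, E) = Hom_{S⁻¹R}(S⁻¹X, E)`. Restricting scalars along
`R → S⁻¹R` therefore keeps the terms of the complex injective (localization preserves
injective maps), and reduces `Hom(I, −)`-exactness for an injective `R`-module `I` to
`Hom(S⁻¹I, −)`-exactness, where `S⁻¹I` is an injective `S⁻¹R`-module because `R` is Noetherian. -/

namespace LocalizedModule

variable {R : Type u} [CommRing R] (S : Submonoid R)
  {E : Type u} [AddCommGroup E] [Module R E] [Module (Localization S) E]
  [IsScalarTower R (Localization S) E]

theorem exists_restrictScalars_comp_mkLinearMap_eq {X : Type u} [AddCommGroup X] [Module R X]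
    (g : X →ₗ[R] E) :
    ∃ g' : LocalizedModule S X →ₗ[Localization S] E,
      g'.restrictScalars R ∘ₗ mkLinearMap S X = g := by
  have := isLocalizedModule_id S E (Localization S)
  exact ⟨IsLocalizedModule.mapExtendScalars S (mkLinearMap S X) LinearMap.id (Localization S) g,
    LinearMap.ext (IsLocalizedModule.map_apply S (mkLinearMap S X) LinearMap.id g)⟩

theorem linearMap_ext_of_comp_mkLinearMap {X : Type u} [AddCommGroup X] [Module R X]
    {g₁ g₂ : LocalizedModule S X →ₗ[Localization S] E}
    (h : g₁.restrictScalars R ∘ₗ mkLinearMap S X = g₂.restrictScalars R ∘ₗ mkLinearMap S X) :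
    g₁ = g₂ :=
  LinearMap.restrictScalars_injective R <| IsLocalizedModule.ext S (mkLinearMap S X)
    (isLocalizedModule_id S E (Localization S)).map_units h

end LocalizedModule

open LocalizedModule in
theorem Module.Injective.of_localization {R : Type u} [CommRing R] (S : Submonoid R)
    (E : Type u) [AddCommGroup E] [Module R E] [Module (Localization S) E]
    [IsScalarTower R (Localization S) E] [Module.Injective (Localization S) E] :
    Module.Injective R E where
  out X Y _ _ _ _ f hf g := by
    obtain ⟨g', hg'⟩ := exists_restrictScalars_comp_mkLinearMap_eq S g
    obtain ⟨h, hh⟩ := Module.Injective.out (map S f) (map_injective S f hf) g'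
    refine ⟨h.restrictScalars R ∘ₗ mkLinearMap S Y, fun x => ?_⟩
    simp [← hh, ← hg']

open LocalizedModule in
theorem LinearMap.exists_restrictScalars_comp_eq_of_localizedModule {R : Type u} [CommRing R]
    {S : Submonoid R} {X Y Z : Type u} [AddCommGroup X] [AddCommGroup Y] [AddCommGroup Z]
    [Module (Localization S) X] [Module (Localization S) Y] [Module (Localization S) Z]
    [Module R X] [Module R Y] [Module R Z] [IsScalarTower R (Localization S) X]
    [IsScalarTower R (Localization S) Y] [IsScalarTower R (Localization S) Z]
    (d₁ : X →ₗ[Localization S] Y) (d₂ : Y →ₗ[Localization S] Z)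
    {I : Type u} [AddCommGroup I] [Module R I]
    (hlift : ∀ φ : LocalizedModule S I →ₗ[Localization S] Y, d₂ ∘ₗ φ = 0 →
      ∃ ψ : LocalizedModule S I →ₗ[Localization S] X, d₁ ∘ₗ ψ = φ)
    (φ : I →ₗ[R] Y) (hφ : d₂.restrictScalars R ∘ₗ φ = 0) :
    ∃ ψ : I →ₗ[R] X, d₁.restrictScalars R ∘ₗ ψ = φ := by
  obtain ⟨φ', rfl⟩ := exists_restrictScalars_comp_mkLinearMap_eq S φ
  obtain ⟨ψ', hψ'⟩ := hlift φ' <| linearMap_ext_of_comp_mkLinearMap S hφ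
  exact ⟨ψ'.restrictScalars R ∘ₗ mkLinearMap S I, by rw [← hψ']; rfl⟩

open GG in
/-- If `M` is a Gorenstein injective `S⁻¹R`-module, then `M` is Gorenstein injective as an
`R`-module. -/
theorem stmt0 (R : Type u) [CommRing R] [IsNoetherianRing R] (S : Submonoid R)
    (M : Type u) [AddCommGroup M] [Module (Localization S) M] [Module R M]
    [IsScalarTower R (Localization S) M]
    (h : IsGorensteinInjective (Localization S) M) :
    IsGorensteinInjective R M := by
  obtain ⟨X, d, hinj, hexact, hlift, ⟨e⟩⟩ := h
  let (n : ℤ) : Module R (X n) := Module.compHom (X n) (algebraMap R (Localization S))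
  have (n : ℤ) : IsScalarTower R (Localization S) (X n) :=
    IsScalarTower.of_algebraMap_smul fun _ _ => rfl
  refine ⟨fun n => ModuleCat.of R (X n), fun n => (d n).restrictScalars R,
    fun n => Module.Injective.of_localization S (X n), fun n => by
      rw [LinearMap.range_restrictScalars, LinearMap.ker_restrictScalars, hexact n], ?_,
    ⟨(e.restrictScalars R).trans
      (((LinearMap.ker (d 0)).restrictScalarsEquiv R).restrictScalars R).symm⟩⟩
  intro I hI n φ hφ
  exact LinearMap.exists_restrictScalars_comp_eq_of_localizedModule (d n) (d (n + 1))
    (fun φ' hφ' => hlift (.of _ (LocalizedModule S I))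
      (Module.injective_of_isLocalizedModule S (LocalizedModule.mkLinearMap S I)) n φ' hφ') φ hφ
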